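/- Let ρ ≥ 1 and suppose that for each a ∈ X there is an orthonormal representation {ψ̃_{a,b}}_{b ∈ X} of degree ρ of the channel in a finite-dimensional complex inner product space, together with a unit vector f_a in that space. Let n ≥ 1, let x̄ ∈ X^n, let m : X × X → ℕ satisfy ∑_{a,b} m(a,b) = n and suppose each symbol a appears exactly ∑_b m(a,b) times in x̄. Let θ ∈ ℝ satisfy ∏_{a,b ∈ X} |⟨ψ̃_{a,b}, f_a⟩|^{2·m(a,b)} ≥ e^{−nθ}. Let M ≥ 2 and let c_1, …, c_M ∈ X^n be codewords each having conditional composition m from x̄, and assume M·e^{−nθ} ≥ 1. Then max over pairs j ≠ j' of ∏_{i=1}^n ⟨ψ_{c_j(i)}, ψ_{c_{j'}(i)}⟩ is at least ((M·e^{−nθ} − 1)/(M − 1))^ρ. -/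

import Mathlib

/-!
Tensor the representation vectors along the block: `vⱼ = ⊗ᵢ ψ̃_{x̄ᵢ, cⱼ(i)}` and `F = ⊗ᵢ f_{x̄ᵢ}`.
These are unit vectors; since every codeword has conditional composition `m` from `x̄`,
`|⟨vⱼ, F⟩|² = ∏_{a,b} |⟨ψ̃_{a,b}, f_a⟩|^{2m(a,b)} ≥ e^{-nθ}`, and by the degree-`ρ` condition
`|⟨vⱼ, vⱼ'⟩| ≤ (∏ᵢ ⟨ψ_{cⱼ(i)}, ψ_{cⱼ'(i)}⟩)^{1/ρ}`. If `M` unit vectors have pairwise overlaps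
at most `σ`, then a unit vector `F` satisfies `∑ⱼ |⟨vⱼ, F⟩|² ≤ 1 + (M - 1)σ` (test `F` against
`u = ∑ⱼ ⟨vⱼ, F⟩ vⱼ` and bound `‖u‖²` entrywise through the Gram matrix). With `σ` the largest
overlap this gives `M e^{-nθ} ≤ 1 + (M - 1)σ`.
-/

open Finset

noncomputable section

section TensorVec

variable (𝕜 : Type*) [RCLike 𝕜] {ι : Type*} [Fintype ι] [DecidableEq ι] {E : ι → Type*}
  [∀ i, NormedAddCommGroup (E i)] [∀ i, InnerProductSpace 𝕜 (E i)]
  [∀ i, FiniteDimensional 𝕜 (E i)]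

/-- `⊗ᵢ pᵢ`, in coordinates with respect to the product of the standard orthonormal bases. -/
def tensorVec (p : ∀ i, E i) : EuclideanSpace 𝕜 (∀ i, Fin (Module.finrank 𝕜 (E i))) :=
  WithLp.toLp 2 fun t => ∏ i, (stdOrthonormalBasis 𝕜 (E i)).repr (p i) (t i)

variable {𝕜}

theorem inner_tensorVec (p q : ∀ i, E i) :
    inner 𝕜 (tensorVec 𝕜 p) (tensorVec 𝕜 q) = ∏ i, inner 𝕜 (p i) (q i) := by
  simp only [← fun i => (stdOrthonormalBasis 𝕜 (E i)).repr.inner_map_map (p i) (q i),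
    tensorVec, PiLp.inner_apply, RCLike.inner_apply', map_prod, ← prod_mul_distrib,
    prod_univ_sum, Fintype.piFinset_univ]

theorem norm_tensorVec (p : ∀ i, E i) : ‖tensorVec 𝕜 p‖ = ∏ i, ‖p i‖ := by
  have h : ((‖tensorVec 𝕜 p‖ ^ 2 : ℝ) : 𝕜) = ((∏ i, ‖p i‖) ^ 2 : ℝ) := by
    push_cast
    simp only [← inner_self_eq_norm_sq_to_K, inner_tensorVec, ← prod_pow]
  exact (pow_left_inj₀ (norm_nonneg _) (prod_nonneg fun i _ => norm_nonneg _) two_ne_zero).1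
    (RCLike.ofReal_injective h)

theorem norm_inner_tensorVec_le_prod_rpow {p q : ∀ i, E i} {β : ι → ℝ} (hβ : ∀ i, 0 ≤ β i)
    {r : ℝ} (hpq : ∀ i, ‖inner 𝕜 (p i) (q i)‖ ≤ β i ^ r) :
    ‖inner 𝕜 (tensorVec 𝕜 p) (tensorVec 𝕜 q)‖ ≤ (∏ i, β i) ^ r := by
  rw [inner_tensorVec, norm_prod, ← Real.finsetProd_rpow _ _ fun i _ => hβ i]
  exact prod_le_prod (fun i _ => norm_nonneg _) fun i _ => hpq i

end TensorVec

section Gram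

variable {𝕜 V ι : Type*} [RCLike 𝕜] [NormedAddCommGroup V] [InnerProductSpace 𝕜 V]
  [Fintype ι]

theorem norm_sum_smul_sq_le {v : ι → V} (hv : ∀ j, ‖v j‖ ≤ 1) {σ : ℝ}
    (hσ : Pairwise fun j k => ‖inner 𝕜 (v j) (v k)‖ ≤ σ) (a : ι → 𝕜) :
    ‖∑ j, a j • v j‖ ^ 2 ≤ σ * (∑ j, ‖a j‖) ^ 2 + (1 - σ) * ∑ j, ‖a j‖ ^ 2 := by
  classical
  have hentry : ∀ j k, ‖inner 𝕜 (v j) (v k)‖ ≤ σ + if j = k then 1 - σ else 0 := by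
    intro j k
    rcases eq_or_ne j k with rfl | hjk
    · simpa [inner_self_eq_norm_sq_to_K] using pow_le_one₀ (n := 2) (norm_nonneg _) (hv j)
    · simpa [hjk] using hσ hjk
  calc ‖∑ j, a j • v j‖ ^ 2 = ‖inner 𝕜 (∑ j, a j • v j) (∑ j, a j • v j)‖ := by
        rw [inner_self_eq_norm_sq_to_K, norm_pow, RCLike.norm_ofReal, abs_norm]
    _ ≤ ∑ j, ∑ k, ‖a j‖ * ‖a k‖ * ‖inner 𝕜 (v j) (v k)‖ := by
        rw [sum_inner]
        simp only [inner_smul_left, inner_sum, inner_smul_right]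
        refine (norm_sum_le _ _).trans (sum_le_sum fun j _ => (norm_sum_le _ _).trans_eq
          (sum_congr rfl fun k _ => ?_))
        simp only [norm_mul, RCLike.norm_conj]
        ring
    _ ≤ ∑ j, ∑ k, ‖a j‖ * ‖a k‖ * (σ + if j = k then 1 - σ else 0) :=
        sum_le_sum fun j _ => sum_le_sum fun k _ =>
          mul_le_mul_of_nonneg_left (hentry j k) (by positivity)
    _ = σ * (∑ j, ‖a j‖) ^ 2 + (1 - σ) * ∑ j, ‖a j‖ ^ 2 := by
        rw [sq, sum_mul_sum, mul_sum, mul_sum]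
        simp only [mul_add, sum_add_distrib, mul_ite, mul_zero, sum_ite_eq, mem_univ, if_true]
        congr 1
        · exact sum_congr rfl fun j _ => by rw [mul_sum]; exact sum_congr rfl fun k _ => by ring
        · exact sum_congr rfl fun j _ => by ring

theorem sum_norm_inner_sq_le [Nonempty ι] {v : ι → V} (hv : ∀ j, ‖v j‖ ≤ 1) {F : V}
    (hF : ‖F‖ ≤ 1) {σ : ℝ} (hσ0 : 0 ≤ σ) (hσ : Pairwise fun j k => ‖inner 𝕜 (v j) (v k)‖ ≤ σ) :
    ∑ j, ‖inner 𝕜 (v j) F‖ ^ 2 ≤ 1 + (Fintype.card ι - 1) * σ := by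
  set a : ι → 𝕜 := fun j => inner 𝕜 (v j) F
  set S := ∑ j, ‖a j‖ ^ 2
  have hS0 : 0 ≤ S := by positivity
  have hS_le : S ≤ ‖∑ j, a j • v j‖ := by
    have hinner : inner 𝕜 (∑ j, a j • v j) F = (S : 𝕜) := by
      rw [sum_inner]
      push_cast [S]
      exact sum_congr rfl fun j _ => by rw [inner_smul_left]; exact RCLike.conj_mul (a j)
    calc S = ‖inner 𝕜 (∑ j, a j • v j) F‖ := by
          rw [hinner, RCLike.norm_ofReal, abs_of_nonneg hS0]
      _ ≤ ‖∑ j, a j • v j‖ * ‖F‖ := norm_inner_le_norm _ _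
      _ ≤ ‖∑ j, a j • v j‖ := mul_le_of_le_one_right (norm_nonneg _) hF
  have hcard : (1 : ℝ) ≤ Fintype.card ι := by exact_mod_cast Fintype.card_pos
  have hquad : S ^ 2 ≤ S * (1 + (Fintype.card ι - 1) * σ) :=
    calc S ^ 2 ≤ ‖∑ j, a j • v j‖ ^ 2 := pow_le_pow_left₀ hS0 hS_le 2
      _ ≤ σ * (∑ j, ‖a j‖) ^ 2 + (1 - σ) * S := norm_sum_smul_sq_le hv hσ a
      _ ≤ σ * (Fintype.card ι * S) + (1 - σ) * S := by
          gcongr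
          simpa using sq_sum_le_card_mul_sum_sq (s := univ) (f := fun j => ‖a j‖)
      _ = S * (1 + (Fintype.card ι - 1) * σ) := by ring
  have hR : 0 ≤ 1 + (Fintype.card ι - 1) * σ := by nlinarith
  by_contra! h
  nlinarith [mul_lt_mul_of_pos_left h (hR.trans_lt h)]

end Gram

section CondComposition

variable {ι α β : Type*} [Fintype ι] [DecidableEq α] [DecidableEq β]

def HasCondComposition (xbar : ι → α) (x : ι → β) (m : α × β → ℕ) : Prop :=
  ∀ a b, #{i | xbar i = a ∧ x i = b} = m (a, b)

variable [Fintype α] [Fintype β] {xbar : ι → α} {x : ι → β} {m : α × β → ℕ}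

theorem HasCondComposition.prod_eq {M : Type*} [CommMonoid M] (h : HasCondComposition xbar x m)
    (g : α → β → M) : ∏ i, g (xbar i) (x i) = ∏ a, ∏ b, g a b ^ m (a, b) := by
  rw [← Fintype.prod_prod_type' (fun a b => g a b ^ m (a, b)),
    ← prod_fiberwise' univ (fun i => (xbar i, x i)) fun p => g p.1 p.2]
  refine prod_congr rfl fun p _ => ?_
  rw [prod_const, ← h]
  simp only [Prod.ext_iff]

theorem HasCondComposition.norm_inner_tensorVec_sq [DecidableEq ι] {𝕜 : Type*} [RCLike 𝕜]
    {E : α → Type*} [∀ a, NormedAddCommGroup (E a)] [∀ a, InnerProductSpace 𝕜 (E a)]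
    [∀ a, FiniteDimensional 𝕜 (E a)] (h : HasCondComposition xbar x m) (ψ : ∀ a, β → E a)
    (f : ∀ a, E a) :
    ‖inner 𝕜 (tensorVec 𝕜 fun i => ψ (xbar i) (x i)) (tensorVec 𝕜 fun i => f (xbar i))‖ ^ 2 =
      ∏ a, ∏ b, ‖inner 𝕜 (ψ a b) (f a)‖ ^ (2 * m (a, b)) := by
  simp only [inner_tensorVec, norm_prod, ← prod_pow, pow_mul]
  exact h.prod_eq fun a b => ‖inner 𝕜 (ψ a b) (f a)‖ ^ 2

end CondComposition

section Bhattacharyya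

variable {X Y : Type*} [Fintype Y] (W : X → Y → ℝ)

def bhattacharyya (b b' : X) : ℝ := ∑ y, √(W b y * W b' y)

theorem bhattacharyya_nonneg (b b' : X) : 0 ≤ bhattacharyya W b b' :=
  sum_nonneg fun _ _ => Real.sqrt_nonneg _

variable {W}

theorem bhattacharyya_self (hW0 : ∀ x y, 0 ≤ W x y) (hW1 : ∀ x, ∑ y, W x y = 1) (b : X) :
    bhattacharyya W b b = 1 := by
  simp only [bhattacharyya, Real.sqrt_mul_self (hW0 b _), hW1]

theorem norm_inner_le_bhattacharyya_rpow {𝕜 E : Type*} [RCLike 𝕜] [NormedAddCommGroup E]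
    [InnerProductSpace 𝕜 E] (hW0 : ∀ x y, 0 ≤ W x y) (hW1 : ∀ x, ∑ y, W x y = 1) {ρ : ℝ}
    {ψ : X → E} (hψ : ∀ b, ‖ψ b‖ = 1)
    (hrep : ∀ b b', b ≠ b' → ‖inner 𝕜 (ψ b) (ψ b')‖ ≤ bhattacharyya W b b' ^ (1 / ρ))
    (b b' : X) : ‖inner 𝕜 (ψ b) (ψ b')‖ ≤ bhattacharyya W b b' ^ (1 / ρ) := by
  rcases eq_or_ne b b' with rfl | hbb'
  · simp [bhattacharyya_self hW0 hW1, inner_self_eq_norm_sq_to_K, hψ]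
  · exact hrep b b' hbb'

end Bhattacharyya

theorem stmt5_general {X Y : Type*} [Fintype X] [Fintype Y] [DecidableEq X]
    {E : X → Type*} [∀ a, NormedAddCommGroup (E a)] [∀ a, InnerProductSpace ℂ (E a)]
    [∀ a, FiniteDimensional ℂ (E a)]
    (W : X → Y → ℝ) (hW0 : ∀ x y, 0 ≤ W x y) (hW1 : ∀ x, ∑ y, W x y = 1)
    (ρ : ℝ) (hρ : 1 ≤ ρ)
    (ψt : ∀ a : X, X → E a) (hψt : ∀ a b, ‖ψt a b‖ = 1)
    (hrep : ∀ a b b', b ≠ b' →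
      ‖(inner ℂ (ψt a b) (ψt a b') : ℂ)‖ ≤ (∑ y, Real.sqrt (W b y * W b' y)) ^ (1 / ρ))
    (f : ∀ a : X, E a) (hf : ∀ a, ‖f a‖ = 1)
    (n : ℕ) (xbar : Fin n → X) (mm : X × X → ℕ)
    (θ : ℝ)
    (hθ : Real.exp (-(n * θ)) ≤ ∏ a, ∏ b, ‖(inner ℂ (ψt a b) (f a) : ℂ)‖ ^ (2 * mm (a, b)))
    (M : ℕ) (hM : 2 ≤ M)
    (c : Fin M → Fin n → X)
    (hc : ∀ j a b, (Finset.univ.filter fun i => xbar i = a ∧ c j i = b).card = mm (a, b))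
    (hMe : 1 ≤ (M : ℝ) * Real.exp (-(n * θ))) :
    ∃ j j', j ≠ j' ∧
      (((M : ℝ) * Real.exp (-(n * θ)) - 1) / ((M : ℝ) - 1)) ^ ρ
        ≤ ∏ i, ∑ y, Real.sqrt (W (c j i) y * W (c j' i) y) := by
  set v := fun j => tensorVec ℂ fun i => ψt (xbar i) (c j i)
  set F := tensorVec ℂ fun i => f (xbar i)
  set P := fun q : Fin M × Fin M => ∏ i, bhattacharyya W (c q.1 i) (c q.2 i)
  have hP0 (q) : 0 ≤ P q := prod_nonneg fun i _ => bhattacharyya_nonneg W _ _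
  obtain ⟨p, hp, hmax⟩ := (univ : Finset (Fin M)).offDiag.exists_max_image P
    ⟨(⟨0, by omega⟩, ⟨1, by omega⟩), by simp [Fin.ext_iff]⟩
  refine ⟨p.1, p.2, (mem_offDiag.1 hp).2.2, ?_⟩
  have hpair : Pairwise fun j k => ‖inner ℂ (v j) (v k)‖ ≤ P p ^ (1 / ρ) := fun j k hjk =>
    (norm_inner_tensorVec_le_prod_rpow (fun i => bhattacharyya_nonneg W _ _) fun i =>
      norm_inner_le_bhattacharyya_rpow hW0 hW1 (hψt _) (hrep _) _ _).trans
      (Real.rpow_le_rpow (hP0 (j, k)) (hmax (j, k) (by simpa using hjk)) (by positivity))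
  have hsum : M * Real.exp (-(n * θ)) ≤ ∑ j, ‖inner ℂ (v j) F‖ ^ 2 := by
    simpa using sum_le_sum (s := univ) fun j _ =>
      hθ.trans_eq (HasCondComposition.norm_inner_tensorVec_sq (hc j) ψt f).symm
  have : Nonempty (Fin M) := ⟨⟨0, by omega⟩⟩
  have hgram := sum_norm_inner_sq_le (fun j => by simp [v, norm_tensorVec, hψt])
    (F := F) (by simp [F, norm_tensorVec, hf]) (Real.rpow_nonneg (hP0 p) _) hpair
  have hM1 : (0 : ℝ) < M - 1 := sub_pos.2 (by exact_mod_cast hM)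
  have hbase : (M * Real.exp (-(n * θ)) - 1) / (M - 1) ≤ P p ^ (1 / ρ) := by
    rw [div_le_iff₀ hM1]
    simp only [Fintype.card_fin] at hgram
    linarith
  calc _ ≤ (P p ^ (1 / ρ)) ^ ρ :=
        Real.rpow_le_rpow (div_nonneg (by linarith) hM1.le) hbase (by linarith)
    _ = P p := by rw [one_div, Real.rpow_inv_rpow (hP0 p) (by positivity)]

/-- Conditional-composition umbrella bound: given, for each symbol `a`, an orthonormal
representation `ψt a` of degree `ρ` with handle `f a`, a fixed sequence `x̄`, joint
counts `mm` with `∏_{a,b} |⟨ψt a b, f a⟩|^{2 m(a,b)} ≥ e^{−nθ}`, and `M ≥ 2` codewords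
all of conditional composition `mm` from `x̄`, some pair `j ≠ j'` of codewords has
Bhattacharyya coefficient at least `((M e^{−nθ} − 1)/(M − 1))^ρ`. -/
theorem stmt5 {X Y : Type*} [Fintype X] [Fintype Y] [DecidableEq X]
    {E : X → Type*} [∀ a, NormedAddCommGroup (E a)] [∀ a, InnerProductSpace ℂ (E a)]
    [∀ a, FiniteDimensional ℂ (E a)]
    (W : X → Y → ℝ) (hW0 : ∀ x y, 0 ≤ W x y) (hW1 : ∀ x, ∑ y, W x y = 1)
    (ρ : ℝ) (hρ : 1 ≤ ρ)
    (ψt : ∀ a : X, X → E a) (hψt : ∀ a b, ‖ψt a b‖ = 1)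
    (hrep : ∀ a b b', b ≠ b' →
      ‖(inner ℂ (ψt a b) (ψt a b') : ℂ)‖ ≤ (∑ y, Real.sqrt (W b y * W b' y)) ^ (1 / ρ))
    (f : ∀ a : X, E a) (hf : ∀ a, ‖f a‖ = 1)
    (n : ℕ) (hn : 1 ≤ n) (xbar : Fin n → X) (mm : X × X → ℕ)
    (hmm : ∑ p : X × X, mm p = n)
    (hxbar : ∀ a, (Finset.univ.filter fun i => xbar i = a).card = ∑ b, mm (a, b))
    (θ : ℝ)
    (hθ : Real.exp (-(n * θ)) ≤ ∏ a, ∏ b, ‖(inner ℂ (ψt a b) (f a) : ℂ)‖ ^ (2 * mm (a, b)))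
    (M : ℕ) (hM : 2 ≤ M)
    (c : Fin M → Fin n → X)
    (hc : ∀ j a b, (Finset.univ.filter fun i => xbar i = a ∧ c j i = b).card = mm (a, b))
    (hMe : 1 ≤ (M : ℝ) * Real.exp (-(n * θ))) :
    ∃ j j', j ≠ j' ∧
      (((M : ℝ) * Real.exp (-(n * θ)) - 1) / ((M : ℝ) - 1)) ^ ρ
        ≤ ∏ i, ∑ y, Real.sqrt (W (c j i) y * W (c j' i) y) :=
  stmt5_general W hW0 hW1 ρ hρ ψt hψt hrep f hf n xbar mm θ hθ M hM c hc hMe
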